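/- arXiv:1904.09750 — 2 statements merged into one kernel-verified Lean document; each statement's English description precedes it below -/
import Mathlib

section
/- Suppose $f(\vartheta,t)$ and $a(\vartheta,t)$ are bounded, continuously differentiable in $\vartheta$, with $\dot f(\vartheta,t)$ continuously differentiable in $t$, and suppose $\inf_{\vartheta\in\Theta}f(\vartheta,0)>0$ and $\inf_{\vartheta\in\Theta}\dot f(\vartheta,0)>0$, and $y_0>0$. Let $x_t(\vartheta)=y_0\int_0^t f(\vartheta,s)\exp\{\int_0^s a(\vartheta,r)dr\}ds$. Then there exist $\kappa_*>0$ and $t_0>0$ such that for all $t\in(0,t_0]$, $\inf_{\vartheta\in\Theta}\,\partial_\vartheta x_t(\vartheta)\ge \kappa_* t$. -/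
open Set intervalIntegral

set_option maxHeartbeats 1000000 in
/-- Under boundedness, smoothness in `θ`, smoothness in `t` of `ḟ`,
positivity of `f(θ,0)` and `ḟ(θ,0)` uniformly over `Θ = (α,β)`, and `y₀ > 0`,
the derivative in `θ` of `x_t(θ) = y₀ ∫₀ᵗ f(θ,s) exp(∫₀ˢ a(θ,r) dr) ds`
satisfies `inf_{θ∈Θ} ∂_θ x_t(θ) ≥ κ⋆ t` for all small `t > 0`. -/
theorem deriv_x_lower_bound_linear
    (T α β y0 : ℝ) (hT : 0 < T) (hαβ : α < β) (hy0 : 0 < y0)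
    (f a fdot adot : ℝ → ℝ → ℝ)
    (hfc : Continuous fun p : ℝ × ℝ => f p.1 p.2)
    (hac : Continuous fun p : ℝ × ℝ => a p.1 p.2)
    (hfb : ∃ K, ∀ θ ∈ Ioo α β, ∀ t ∈ Icc (0:ℝ) T, |f θ t| ≤ K)
    (hab : ∃ K, ∀ θ ∈ Ioo α β, ∀ t ∈ Icc (0:ℝ) T, |a θ t| ≤ K)
    (hfd : ∀ t ∈ Icc (0:ℝ) T, ∀ θ ∈ Ioo α β, HasDerivAt (fun ϑ => f ϑ t) (fdot θ t) θ)
    (had : ∀ t ∈ Icc (0:ℝ) T, ∀ θ ∈ Ioo α β, HasDerivAt (fun ϑ => a ϑ t) (adot θ t) θ)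
    (hfdotC : Continuous fun p : ℝ × ℝ => fdot p.1 p.2)
    (hadotC : Continuous fun p : ℝ × ℝ => adot p.1 p.2)
    (hfdt : ∀ θ ∈ Ioo α β, ContDiff ℝ 1 (fun t => fdot θ t))
    (hf0 : ∃ c > 0, ∀ θ ∈ Ioo α β, c ≤ f θ 0)
    (hfd0 : ∃ c > 0, ∀ θ ∈ Ioo α β, c ≤ fdot θ 0)
    (x : ℝ → ℝ → ℝ)
    (hx : ∀ θ t, x θ t =
      y0 * ∫ s in (0:ℝ)..t, f θ s * Real.exp (∫ r in (0:ℝ)..s, a θ r)) :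
    ∃ κ > 0, ∃ t0 > 0, ∀ t ∈ Ioc (0:ℝ) t0, ∀ θ ∈ Ioo α β,
      κ * t ≤ deriv (fun ϑ => x ϑ t) θ := by
  classical
  obtain ⟨c, hc, hcf⟩ := hfd0
  -- joint continuity of the parametric primitives
  have hAc : Continuous fun p : ℝ × ℝ => ∫ r in (0:ℝ)..p.2, a p.1 r := by
    apply intervalIntegral.continuous_parametric_intervalIntegral_of_continuous
      (f := fun (p : ℝ × ℝ) t => a p.1 t) (s := fun p : ℝ × ℝ => p.2) ?_ continuous_snd
    exact hac.comp ((continuous_fst.comp continuous_fst).prodMk continuous_snd)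
  have hAdc : Continuous fun p : ℝ × ℝ => ∫ r in (0:ℝ)..p.2, adot p.1 r := by
    apply intervalIntegral.continuous_parametric_intervalIntegral_of_continuous
      (f := fun (p : ℝ × ℝ) t => adot p.1 t) (s := fun p : ℝ × ℝ => p.2) ?_ continuous_snd
    exact hadotC.comp ((continuous_fst.comp continuous_fst).prodMk continuous_snd)
  have hgc : Continuous fun p : ℝ × ℝ =>
      (fdot p.1 p.2 + f p.1 p.2 * ∫ r in (0:ℝ)..p.2, adot p.1 r) *
        Real.exp (∫ r in (0:ℝ)..p.2, a p.1 r) :=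
    (hfdotC.add (hfc.mul hAdc)).mul (Real.continuous_exp.comp hAc)
  have hA1 : ∀ ϑ : ℝ, Continuous fun s => ∫ r in (0:ℝ)..s, a ϑ r := fun ϑ => by
    apply intervalIntegral.continuous_parametric_intervalIntegral_of_continuous
      (f := fun (_ : ℝ) r => a ϑ r) (s := fun x : ℝ => x) ?_ continuous_id
    exact hac.comp (continuous_const.prodMk continuous_snd)
  have hAd1 : ∀ ϑ : ℝ, Continuous fun s => ∫ r in (0:ℝ)..s, adot ϑ r := fun ϑ => by
    apply intervalIntegral.continuous_parametric_intervalIntegral_of_continuous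
      (f := fun (_ : ℝ) r => adot ϑ r) (s := fun x : ℝ => x) ?_ continuous_id
    exact hadotC.comp (continuous_const.prodMk continuous_snd)
  have hF1 : ∀ ϑ : ℝ, Continuous fun s => f ϑ s * Real.exp (∫ r in (0:ℝ)..s, a ϑ r) :=
    fun ϑ => (hfc.comp (Continuous.prodMk_right ϑ)).mul
      (Real.continuous_exp.comp (hA1 ϑ))
  have hg1 : ∀ ϑ : ℝ, Continuous fun s =>
      (fdot ϑ s + f ϑ s * ∫ r in (0:ℝ)..s, adot ϑ r) *
        Real.exp (∫ r in (0:ℝ)..s, a ϑ r) :=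
    fun ϑ => ((hfdotC.comp (Continuous.prodMk_right ϑ)).add
      ((hfc.comp (Continuous.prodMk_right ϑ)).mul (hAd1 ϑ))).mul
      (Real.continuous_exp.comp (hA1 ϑ))
  -- derivative of the inner integral in θ
  have hAderiv : ∀ θ ∈ Ioo α β, ∀ s ∈ Icc (0:ℝ) T,
      HasDerivAt (fun ϑ => ∫ r in (0:ℝ)..s, a ϑ r) (∫ r in (0:ℝ)..s, adot θ r) θ := by
    intro θ hθ s hs
    obtain ⟨ε, hε, hball⟩ := Metric.isOpen_iff.1 isOpen_Ioo θ hθ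
    obtain ⟨m, hm, hmax⟩ := ((isCompact_closedBall θ (ε/2)).prod isCompact_Icc).exists_isMaxOn
      (⟨(θ, 0), Metric.mem_closedBall_self (by linarith), ⟨le_refl _, hT.le⟩⟩ :
        (Metric.closedBall θ (ε/2) ×ˢ Icc (0:ℝ) T).Nonempty)
      ((hadotC.norm).continuousOn)
    have hbound : ∀ r, r ∈ Set.uIoc (0:ℝ) s → ∀ ϑ ∈ Metric.ball θ (ε/2),
        ‖adot ϑ r‖ ≤ ‖adot m.1 m.2‖ := by
      intro r hr ϑ hϑ
      have hr' : r ∈ Icc (0:ℝ) T := by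
        rw [uIoc_of_le hs.1] at hr
        exact ⟨hr.1.le, hr.2.trans hs.2⟩
      exact hmax (show ((ϑ, r) : ℝ × ℝ) ∈ Metric.closedBall θ (ε/2) ×ˢ Icc (0:ℝ) T from
        ⟨Metric.ball_subset_closedBall hϑ, hr'⟩)
    have hdiff : ∀ r, r ∈ Set.uIoc (0:ℝ) s → ∀ ϑ ∈ Metric.ball θ (ε/2),
        HasDerivAt (fun ϑ' => a ϑ' r) (adot ϑ r) ϑ := by
      intro r hr ϑ hϑ
      have hr' : r ∈ Icc (0:ℝ) T := by
        rw [uIoc_of_le hs.1] at hr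
        exact ⟨hr.1.le, hr.2.trans hs.2⟩
      exact had r hr' ϑ (hball (Metric.ball_subset_ball (by linarith) hϑ))
    exact (intervalIntegral.hasDerivAt_integral_of_dominated_loc_of_deriv_le
      (μ := MeasureTheory.volume)
      (F := fun ϑ r => a ϑ r) (F' := fun ϑ r => adot ϑ r) (a := (0:ℝ)) (b := s)
      (bound := fun _ => ‖adot m.1 m.2‖) (Metric.ball_mem_nhds θ (show (0:ℝ) < ε/2 by linarith))
      (Filter.Eventually.of_forall fun ϑ =>
        ((hac.comp (Continuous.prodMk_right ϑ)).aestronglyMeasurable))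
      ((hac.comp (Continuous.prodMk_right θ)).intervalIntegrable _ _)
      ((hadotC.comp (Continuous.prodMk_right θ)).aestronglyMeasurable)
      (Filter.Eventually.of_forall hbound)
      intervalIntegrable_const
      (Filter.Eventually.of_forall hdiff)).2
  -- derivative of the outer integral in θ
  have hXderiv : ∀ θ ∈ Ioo α β, ∀ t ∈ Icc (0:ℝ) T,
      HasDerivAt (fun ϑ => ∫ s in (0:ℝ)..t, f ϑ s * Real.exp (∫ r in (0:ℝ)..s, a ϑ r))
        (∫ s in (0:ℝ)..t, (fdot θ s + f θ s * ∫ r in (0:ℝ)..s, adot θ r) *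
          Real.exp (∫ r in (0:ℝ)..s, a θ r)) θ := by
    intro θ hθ t ht
    obtain ⟨ε, hε, hball⟩ := Metric.isOpen_iff.1 isOpen_Ioo θ hθ
    obtain ⟨m, hm, hmax⟩ := ((isCompact_closedBall θ (ε/2)).prod isCompact_Icc).exists_isMaxOn
      (⟨(θ, 0), Metric.mem_closedBall_self (by linarith), ⟨le_refl _, hT.le⟩⟩ :
        (Metric.closedBall θ (ε/2) ×ˢ Icc (0:ℝ) T).Nonempty)
      ((hgc.norm).continuousOn)
    have hbound : ∀ s, s ∈ Set.uIoc (0:ℝ) t → ∀ ϑ ∈ Metric.ball θ (ε/2),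
        ‖(fdot ϑ s + f ϑ s * ∫ r in (0:ℝ)..s, adot ϑ r) *
          Real.exp (∫ r in (0:ℝ)..s, a ϑ r)‖ ≤
        ‖(fdot m.1 m.2 + f m.1 m.2 * ∫ r in (0:ℝ)..m.2, adot m.1 r) *
          Real.exp (∫ r in (0:ℝ)..m.2, a m.1 r)‖ := by
      intro s hs ϑ hϑ
      have hs' : s ∈ Icc (0:ℝ) T := by
        rw [uIoc_of_le ht.1] at hs
        exact ⟨hs.1.le, hs.2.trans ht.2⟩
      exact hmax (show ((ϑ, s) : ℝ × ℝ) ∈ Metric.closedBall θ (ε/2) ×ˢ Icc (0:ℝ) T from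
        ⟨Metric.ball_subset_closedBall hϑ, hs'⟩)
    have hdiff : ∀ s, s ∈ Set.uIoc (0:ℝ) t → ∀ ϑ ∈ Metric.ball θ (ε/2),
        HasDerivAt (fun ϑ' => f ϑ' s * Real.exp (∫ r in (0:ℝ)..s, a ϑ' r))
          ((fdot ϑ s + f ϑ s * ∫ r in (0:ℝ)..s, adot ϑ r) *
            Real.exp (∫ r in (0:ℝ)..s, a ϑ r)) ϑ := by
      intro s hs ϑ hϑ
      have hs' : s ∈ Icc (0:ℝ) T := by
        rw [uIoc_of_le ht.1] at hs
        exact ⟨hs.1.le, hs.2.trans ht.2⟩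
      have hϑ' : ϑ ∈ Ioo α β := hball (Metric.ball_subset_ball (by linarith) hϑ)
      have h1 := (hfd s hs' ϑ hϑ').fun_mul ((hAderiv ϑ hϑ' s hs').exp)
      exact h1.congr_deriv (by ring)
    exact (intervalIntegral.hasDerivAt_integral_of_dominated_loc_of_deriv_le
      (μ := MeasureTheory.volume)
      (F := fun ϑ s => f ϑ s * Real.exp (∫ r in (0:ℝ)..s, a ϑ r))
      (F' := fun ϑ s => (fdot ϑ s + f ϑ s * ∫ r in (0:ℝ)..s, adot ϑ r) *
        Real.exp (∫ r in (0:ℝ)..s, a ϑ r))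
      (a := (0:ℝ)) (b := t)
      (bound := fun _ => ‖(fdot m.1 m.2 + f m.1 m.2 * ∫ r in (0:ℝ)..m.2, adot m.1 r) *
        Real.exp (∫ r in (0:ℝ)..m.2, a m.1 r)‖)
      (Metric.ball_mem_nhds θ (show (0:ℝ) < ε/2 by linarith))
      (Filter.Eventually.of_forall fun ϑ => (hF1 ϑ).aestronglyMeasurable)
      ((hF1 θ).intervalIntegrable _ _)
      ((hg1 θ).aestronglyMeasurable)
      (Filter.Eventually.of_forall hbound)
      intervalIntegrable_const
      (Filter.Eventually.of_forall hdiff)).2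
  -- uniform continuity to find t0
  have hK : IsCompact (Icc α β ×ˢ Icc (0:ℝ) T) := isCompact_Icc.prod isCompact_Icc
  have huc := hK.uniformContinuousOn_of_continuous hgc.continuousOn
  rw [Metric.uniformContinuousOn_iff] at huc
  obtain ⟨δ, hδ, hδ'⟩ := huc (c/2) (by linarith)
  set t0 : ℝ := min (δ/2) T with ht0_def
  have ht0 : 0 < t0 := lt_min (by linarith) hT
  have ht0T : t0 ≤ T := min_le_right _ _
  have hglb : ∀ θ ∈ Ioo α β, ∀ s ∈ Icc (0:ℝ) t0,
      c/2 ≤ (fdot θ s + f θ s * ∫ r in (0:ℝ)..s, adot θ r) *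
        Real.exp (∫ r in (0:ℝ)..s, a θ r) := by
    intro θ hθ s hs
    have hθ' : θ ∈ Icc α β := ⟨hθ.1.le, hθ.2.le⟩
    have hmem1 : ((θ, s) : ℝ × ℝ) ∈ Icc α β ×ˢ Icc (0:ℝ) T := ⟨hθ', hs.1, hs.2.trans ht0T⟩
    have hmem2 : ((θ, (0:ℝ)) : ℝ × ℝ) ∈ Icc α β ×ˢ Icc (0:ℝ) T := ⟨hθ', le_refl _, hT.le⟩
    have hdist : dist ((θ, s) : ℝ × ℝ) (θ, 0) < δ := by
      rw [Prod.dist_eq]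
      simp only [dist_self]
      rw [max_eq_right dist_nonneg, Real.dist_eq, sub_zero, abs_of_nonneg hs.1]
      have := hs.2.trans (min_le_left (δ/2) T)
      linarith
    have hnear := hδ' _ hmem1 _ hmem2 hdist
    rw [Real.dist_eq] at hnear
    have h0 : c ≤ (fdot θ 0 + f θ 0 * ∫ r in (0:ℝ)..(0:ℝ), adot θ r) *
        Real.exp (∫ r in (0:ℝ)..(0:ℝ), a θ r) := by
      rw [intervalIntegral.integral_same, intervalIntegral.integral_same]
      simpa using hcf θ hθ
    have habs := abs_lt.1 hnear
    simp only at habs h0 ⊢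
    linarith [habs.1]
  -- conclusion
  refine ⟨y0 * (c/2), by positivity, t0, ht0, ?_⟩
  intro t ht θ hθ
  have htT : t ∈ Icc (0:ℝ) T := ⟨ht.1.le, ht.2.trans ht0T⟩
  have hD : HasDerivAt (fun ϑ => x ϑ t)
      (y0 * ∫ s in (0:ℝ)..t, (fdot θ s + f θ s * ∫ r in (0:ℝ)..s, adot θ r) *
        Real.exp (∫ r in (0:ℝ)..s, a θ r)) θ := by
    have hxe : (fun ϑ => x ϑ t)
        = fun ϑ => y0 * ∫ s in (0:ℝ)..t, f ϑ s * Real.exp (∫ r in (0:ℝ)..s, a ϑ r) := by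
      funext ϑ; exact hx ϑ t
    rw [hxe]
    exact (hXderiv θ hθ t htT).const_mul y0
  rw [hD.deriv]
  have hint : (c/2) * t ≤ ∫ s in (0:ℝ)..t, (fdot θ s + f θ s * ∫ r in (0:ℝ)..s, adot θ r) *
      Real.exp (∫ r in (0:ℝ)..s, a θ r) := by
    have hmono := intervalIntegral.integral_mono_on (f := fun _ => c/2)
      (g := fun s => (fdot θ s + f θ s * ∫ r in (0:ℝ)..s, adot θ r) *
        Real.exp (∫ r in (0:ℝ)..s, a θ r)) (μ := MeasureTheory.volume)
      ht.1.le intervalIntegrable_const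
      ((hg1 θ).intervalIntegrable _ _)
      (fun s hs => hglb θ hθ s ⟨hs.1, hs.2.trans ht.2⟩)
    rw [intervalIntegral.integral_const, sub_zero, smul_eq_mul] at hmono
    linarith
  calc y0 * (c/2) * t = y0 * ((c/2) * t) := by ring
    _ ≤ _ := mul_le_mul_of_nonneg_left hint hy0.le
end

section
/- Suppose $f(\vartheta,t)=f(t)$ does not depend on $\vartheta$, $f$ and $a(\vartheta,\cdot)$ are bounded continuous, $a$ is continuously differentiable in $\vartheta$ with $\dot a(\vartheta,\cdot)$ continuously differentiable in $t$, $\inf_{\vartheta\in\Theta}a(\vartheta,0)>0$, $\inf_{\vartheta\in\Theta}\dot a(\vartheta,0)>0$, $f(0)>0$ and $y_0>0$. Let $x_t(\vartheta)=y_0\int_0^t f(s)\exp\{\int_0^s a(\vartheta,r)dr\}ds$. Then there exist $\kappa^*>0$ and $t_0>0$ such that for all $t\in(0,t_0]$, $\inf_{\vartheta\in\Theta}\,\partial_\vartheta x_t(\vartheta)\ge \kappa^* t^2$. -/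
open Set intervalIntegral

section AuxLemmas
open MeasureTheory Metric Filter
open scoped Interval

lemma inner_hasDerivAt_aux (α β T : ℝ) (a adot : ℝ → ℝ → ℝ)
    (hac : Continuous fun p : ℝ × ℝ => a p.1 p.2)
    (hadotC : Continuous fun p : ℝ × ℝ => adot p.1 p.2)
    (had : ∀ t ∈ Icc (0:ℝ) T, ∀ θ ∈ Ioo α β, HasDerivAt (fun ϑ => a ϑ t) (adot θ t) θ)
    {θ : ℝ} (hθ : θ ∈ Ioo α β) {s : ℝ} (hs : s ∈ Icc (0:ℝ) T) :
    HasDerivAt (fun u : ℝ => ∫ r in (0:ℝ)..s, a u r) (∫ r in (0:ℝ)..s, adot θ r) θ := by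
  obtain ⟨M, hM⟩ : ∃ M, ∀ p ∈ (Icc α β ×ˢ Icc (0:ℝ) T), ‖adot p.1 p.2‖ ≤ M :=
    ((isCompact_Icc.prod isCompact_Icc).exists_bound_of_continuousOn hadotC.continuousOn)
  set ε := min (θ - α) (β - θ) with hε
  have hε0 : 0 < ε := lt_min (by linarith [hθ.1]) (by linarith [hθ.2])
  have hball : ball θ ε ⊆ Ioo α β := by
    intro u hu
    rw [Real.ball_eq_Ioo] at hu
    constructor
    · have := hu.1; have h1 : ε ≤ θ - α := min_le_left _ _; linarith
    · have := hu.2; have h2 : ε ≤ β - θ := min_le_right _ _; linarith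
  have hsub : Ι (0:ℝ) s ⊆ Icc (0:ℝ) T := by
    rw [uIoc_of_le hs.1]
    exact fun r hr => ⟨hr.1.le, hr.2.trans hs.2⟩
  have hcu : ∀ u : ℝ, Continuous fun r => a u r := fun u =>
    hac.comp (continuous_const.prodMk continuous_id)
  have hcu' : ∀ u : ℝ, Continuous fun r => adot u r := fun u =>
    hadotC.comp (continuous_const.prodMk continuous_id)
  have key := intervalIntegral.hasDerivAt_integral_of_dominated_loc_of_deriv_le
    (F := fun u r => a u r) (F' := fun u r => adot u r) (x₀ := θ) (a := (0:ℝ)) (b := s)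
    (μ := MeasureTheory.volume) (bound := fun _ => M) (ball_mem_nhds θ hε0)
    (Eventually.of_forall fun u => (hcu u).aestronglyMeasurable)
    ((hcu θ).intervalIntegrable _ _)
    (hcu' θ).aestronglyMeasurable
    (Eventually.of_forall fun r hr u hu =>
      hM (u, r) ⟨Ioo_subset_Icc_self (hball hu), hsub hr⟩)
    intervalIntegrable_const
    (Eventually.of_forall fun r hr u hu => had r (hsub hr) u (hball hu))
  exact key.2

lemma outer_hasDerivAt_aux (T α β : ℝ) (f : ℝ → ℝ) (a adot : ℝ → ℝ → ℝ)
    (hfc : ContinuousOn f (Icc 0 T))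
    (hfb : ∃ K, ∀ t ∈ Icc (0:ℝ) T, |f t| ≤ K)
    (hac : Continuous fun p : ℝ × ℝ => a p.1 p.2)
    (hab : ∃ K, ∀ θ ∈ Ioo α β, ∀ t ∈ Icc (0:ℝ) T, |a θ t| ≤ K)
    (had : ∀ t ∈ Icc (0:ℝ) T, ∀ θ ∈ Ioo α β, HasDerivAt (fun ϑ => a ϑ t) (adot θ t) θ)
    (hadotC : Continuous fun p : ℝ × ℝ => adot p.1 p.2)
    {θ : ℝ} (hθ : θ ∈ Ioo α β) {t : ℝ} (ht : t ∈ Ioc (0:ℝ) T) :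
    IntervalIntegrable (fun s => f s *
        (Real.exp (∫ r in (0:ℝ)..s, a θ r) * ∫ r in (0:ℝ)..s, adot θ r))
        MeasureTheory.volume 0 t ∧
      HasDerivAt (fun u : ℝ => ∫ s in (0:ℝ)..t, f s * Real.exp (∫ r in (0:ℝ)..s, a u r))
        (∫ s in (0:ℝ)..t, f s *
          (Real.exp (∫ r in (0:ℝ)..s, a θ r) * ∫ r in (0:ℝ)..s, adot θ r)) θ := by
  obtain ⟨Kf, hKf⟩ := hfb
  obtain ⟨Ka, hKa⟩ := hab
  obtain ⟨M, hM⟩ : ∃ M, ∀ p ∈ (Icc α β ×ˢ Icc (0:ℝ) T), ‖adot p.1 p.2‖ ≤ M :=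
    ((isCompact_Icc.prod isCompact_Icc).exists_bound_of_continuousOn hadotC.continuousOn)
  have hT : (0:ℝ) ≤ T := (ht.1.trans_le ht.2).le
  have hKf0 : 0 ≤ Kf := (abs_nonneg _).trans (hKf 0 ⟨le_rfl, hT⟩)
  have hKa0 : 0 ≤ Ka := (abs_nonneg _).trans (hKa θ hθ 0 ⟨le_rfl, hT⟩)
  have hM0 : 0 ≤ M := (norm_nonneg _).trans (hM (θ, 0) ⟨Ioo_subset_Icc_self hθ, le_rfl, hT⟩)
  set ε := min (θ - α) (β - θ) with hε
  have hε0 : 0 < ε := lt_min (by linarith [hθ.1]) (by linarith [hθ.2])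
  have hball : ball θ ε ⊆ Ioo α β := by
    intro u hu
    rw [Real.ball_eq_Ioo] at hu
    constructor
    · have := hu.1; have h1 : ε ≤ θ - α := min_le_left _ _; linarith
    · have := hu.2; have h2 : ε ≤ β - θ := min_le_right _ _; linarith
  have hsub : Ι (0:ℝ) t ⊆ Icc (0:ℝ) T := by
    rw [uIoc_of_le ht.1.le]
    exact fun r hr => ⟨hr.1.le, hr.2.trans ht.2⟩
  have hcu : ∀ u : ℝ, Continuous fun r => a u r := fun u =>
    hac.comp (continuous_const.prodMk continuous_id)
  have hcu' : ∀ u : ℝ, Continuous fun r => adot u r := fun u =>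
    hadotC.comp (continuous_const.prodMk continuous_id)
  have hprim : ∀ u : ℝ, Continuous fun s : ℝ => ∫ r in (0:ℝ)..s, a u r := fun u =>
    intervalIntegral.continuous_primitive (fun c d => (hcu u).intervalIntegrable c d) 0
  have hprim' : ∀ u : ℝ, Continuous fun s : ℝ => ∫ r in (0:ℝ)..s, adot u r := fun u =>
    intervalIntegral.continuous_primitive (fun c d => (hcu' u).intervalIntegrable c d) 0
  -- pointwise integral bounds
  have hintA : ∀ u ∈ Ioo α β, ∀ s ∈ Icc (0:ℝ) T, |∫ r in (0:ℝ)..s, a u r| ≤ Ka * T := by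
    intro u hu s hs
    have h1 : ‖∫ r in (0:ℝ)..s, a u r‖ ≤ Ka * |s - 0| := by
      apply intervalIntegral.norm_integral_le_of_norm_le_const
      intro r hr
      have hr' : r ∈ Icc (0:ℝ) T := by
        rw [uIoc_of_le hs.1] at hr
        exact ⟨hr.1.le, hr.2.trans hs.2⟩
      exact hKa u hu r hr'
    have : |s - 0| ≤ T := by rw [sub_zero, abs_of_nonneg hs.1]; exact hs.2
    calc |∫ r in (0:ℝ)..s, a u r| ≤ Ka * |s - 0| := h1
      _ ≤ Ka * T := by nlinarith
  have hintB : ∀ u ∈ Ioo α β, ∀ s ∈ Icc (0:ℝ) T, |∫ r in (0:ℝ)..s, adot u r| ≤ M * T := by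
    intro u hu s hs
    have h1 : ‖∫ r in (0:ℝ)..s, adot u r‖ ≤ M * |s - 0| := by
      apply intervalIntegral.norm_integral_le_of_norm_le_const
      intro r hr
      have hr' : r ∈ Icc (0:ℝ) T := by
        rw [uIoc_of_le hs.1] at hr
        exact ⟨hr.1.le, hr.2.trans hs.2⟩
      exact hM (u, r) ⟨Ioo_subset_Icc_self hu, hr'⟩
    have : |s - 0| ≤ T := by rw [sub_zero, abs_of_nonneg hs.1]; exact hs.2
    calc |∫ r in (0:ℝ)..s, adot u r| ≤ M * |s - 0| := h1
      _ ≤ M * T := by nlinarith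
  have hFmeas : ∀ u : ℝ, AEStronglyMeasurable
      (fun s => f s * Real.exp (∫ r in (0:ℝ)..s, a u r))
      (MeasureTheory.volume.restrict (Ι (0:ℝ) t)) := by
    intro u
    have hco : ContinuousOn (fun s => f s * Real.exp (∫ r in (0:ℝ)..s, a u r)) (Icc 0 T) :=
      hfc.mul (((hprim u).rexp).continuousOn)
    exact (hco.aestronglyMeasurable measurableSet_Icc).mono_measure
      (Measure.restrict_mono hsub le_rfl)
  have hF'meas : AEStronglyMeasurable
      (fun s => f s * (Real.exp (∫ r in (0:ℝ)..s, a θ r) * ∫ r in (0:ℝ)..s, adot θ r))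
      (MeasureTheory.volume.restrict (Ι (0:ℝ) t)) := by
    have hco : ContinuousOn (fun s => f s *
        (Real.exp (∫ r in (0:ℝ)..s, a θ r) * ∫ r in (0:ℝ)..s, adot θ r)) (Icc 0 T) :=
      hfc.mul ((((hprim θ).rexp).mul (hprim' θ)).continuousOn)
    exact (hco.aestronglyMeasurable measurableSet_Icc).mono_measure
      (Measure.restrict_mono hsub le_rfl)
  have hFint : IntervalIntegrable (fun s => f s * Real.exp (∫ r in (0:ℝ)..s, a θ r))
      MeasureTheory.volume 0 t := by
    apply ContinuousOn.intervalIntegrable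
    apply (hfc.mul (((hprim θ).rexp).continuousOn)).mono
    rw [uIcc_of_le ht.1.le]
    exact Icc_subset_Icc le_rfl ht.2
  exact intervalIntegral.hasDerivAt_integral_of_dominated_loc_of_deriv_le
    (F := fun u s => f s * Real.exp (∫ r in (0:ℝ)..s, a u r))
    (F' := fun u s => f s *
      (Real.exp (∫ r in (0:ℝ)..s, a u r) * ∫ r in (0:ℝ)..s, adot u r))
    (x₀ := θ) (a := (0:ℝ)) (b := t) (μ := MeasureTheory.volume)
    (bound := fun _ => Kf * (Real.exp (Ka * T) * (M * T))) (ball_mem_nhds θ hε0)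
    (Eventually.of_forall hFmeas) hFint hF'meas
    (Eventually.of_forall (by
      intro s hs u hu
      have hs' : s ∈ Icc (0:ℝ) T := hsub hs
      have hu' : u ∈ Ioo α β := hball hu
      have h1 : |f s| ≤ Kf := hKf s hs'
      have h2 : Real.exp (∫ r in (0:ℝ)..s, a u r) ≤ Real.exp (Ka * T) :=
        Real.exp_le_exp.2 ((le_abs_self _).trans (hintA u hu' s hs'))
      have h3 : |∫ r in (0:ℝ)..s, adot u r| ≤ M * T := hintB u hu' s hs'
      have hE0 : (0:ℝ) < Real.exp (∫ r in (0:ℝ)..s, a u r) := Real.exp_pos _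
      calc ‖f s * (Real.exp (∫ r in (0:ℝ)..s, a u r) * ∫ r in (0:ℝ)..s, adot u r)‖
          = |f s| * (Real.exp (∫ r in (0:ℝ)..s, a u r) * |∫ r in (0:ℝ)..s, adot u r|) := by
            rw [Real.norm_eq_abs, abs_mul, abs_mul, abs_of_pos hE0]
        _ ≤ Kf * (Real.exp (Ka * T) * (M * T)) := by
            apply mul_le_mul h1 (mul_le_mul h2 h3 (abs_nonneg _) (Real.exp_pos _).le)
              (by positivity) hKf0))
    intervalIntegrable_const
    (Eventually.of_forall (by
      intro s hs u hu
      have hs' : s ∈ Icc (0:ℝ) T := hsub hs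
      have hu' : u ∈ Ioo α β := hball hu
      exact ((inner_hasDerivAt_aux α β T a adot hac hadotC had hu' hs').exp).const_mul (f s)))

end AuxLemmas

/-- Degenerate case `f(θ,t) = f(t)`. Under positivity of
`a(θ,0)`, `ȧ(θ,0)` uniformly over `Θ = (α,β)`, `f(0) > 0`, `y₀ > 0`, the
derivative in `θ` of `x_t(θ) = y₀ ∫₀ᵗ f(s) exp(∫₀ˢ a(θ,r) dr) ds` satisfies
`inf_{θ∈Θ} ∂_θ x_t(θ) ≥ κ* t²` for all small `t > 0`. -/
theorem deriv_x_lower_bound_degenerate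
    (T α β y0 : ℝ) (hT : 0 < T) (hαβ : α < β) (hy0 : 0 < y0)
    (f : ℝ → ℝ) (a adot : ℝ → ℝ → ℝ)
    (hfc : ContinuousOn f (Icc 0 T))
    (hfb : ∃ K, ∀ t ∈ Icc (0:ℝ) T, |f t| ≤ K)
    (hac : Continuous fun p : ℝ × ℝ => a p.1 p.2)
    (hab : ∃ K, ∀ θ ∈ Ioo α β, ∀ t ∈ Icc (0:ℝ) T, |a θ t| ≤ K)
    (had : ∀ t ∈ Icc (0:ℝ) T, ∀ θ ∈ Ioo α β, HasDerivAt (fun ϑ => a ϑ t) (adot θ t) θ)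
    (hadotC : Continuous fun p : ℝ × ℝ => adot p.1 p.2)
    (hadt : ∀ θ ∈ Ioo α β, ContDiff ℝ 1 (fun t => adot θ t))
    (ha0 : ∃ c > 0, ∀ θ ∈ Ioo α β, c ≤ a θ 0)
    (had0 : ∃ c > 0, ∀ θ ∈ Ioo α β, c ≤ adot θ 0)
    (hf0 : 0 < f 0)
    (x : ℝ → ℝ → ℝ)
    (hx : ∀ θ t, x θ t =
      y0 * ∫ s in (0:ℝ)..t, f s * Real.exp (∫ r in (0:ℝ)..s, a θ r)) :
    ∃ κ > 0, ∃ t0 > 0, ∀ t ∈ Ioc (0:ℝ) t0, ∀ θ ∈ Ioo α β,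
      κ * t ^ 2 ≤ deriv (fun ϑ => x ϑ t) θ := by
  obtain ⟨c, hc0, hcb⟩ := had0
  obtain ⟨Ka, hKa⟩ := hab
  have hθm : (α + β) / 2 ∈ Ioo α β := ⟨by linarith, by linarith⟩
  have hKa0 : 0 ≤ Ka := (abs_nonneg _).trans (hKa _ hθm 0 ⟨le_rfl, hT.le⟩)
  set m := Real.exp (-(Ka * T)) with hm
  have hm0 : 0 < m := Real.exp_pos _
  -- uniform positivity of adot near r = 0
  have hcIcc : ∀ θ ∈ Icc α β, c ≤ adot θ 0 := by
    have hcl : IsClosed {θ : ℝ | c ≤ adot θ 0} :=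
      isClosed_le continuous_const (hadotC.comp (continuous_id.prodMk continuous_const))
    intro θ hθ
    have : θ ∈ closure (Ioo α β) := by rwa [closure_Ioo hαβ.ne]
    exact closure_minimal (fun u hu => hcb u hu) hcl this
  have hUopen : IsOpen {p : ℝ × ℝ | c / 2 < adot p.1 p.2} :=
    isOpen_lt continuous_const hadotC
  have hKU : (Icc α β ×ˢ ({0} : Set ℝ)) ⊆ {p : ℝ × ℝ | c / 2 < adot p.1 p.2} := by
    rintro ⟨θ, r⟩ ⟨hθ, hr⟩
    simp only [mem_singleton_iff] at hr
    subst hr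
    have := hcIcc θ hθ
    simpa using by linarith
  obtain ⟨δ, hδ0, hδ⟩ := (isCompact_Icc.prod isCompact_singleton).exists_thickening_subset_open
    hUopen hKU
  have hlow : ∀ θ ∈ Icc α β, ∀ r ∈ Icc (0:ℝ) (δ/2), c / 2 < adot θ r := by
    intro θ hθ r hr
    have hmem : (θ, r) ∈ Metric.thickening δ (Icc α β ×ˢ ({0} : Set ℝ)) := by
      rw [Metric.mem_thickening_iff]
      refine ⟨(θ, 0), ⟨hθ, rfl⟩, ?_⟩
      rw [Prod.dist_eq]
      simp only [dist_self, Real.dist_eq, sub_zero]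
      rw [abs_of_nonneg hr.1]
      have := hr.2
      simp only [max_lt_iff]
      constructor <;> linarith
    exact hδ hmem
  -- positivity of f near 0
  have hfev : ∀ᶠ s in nhdsWithin 0 (Icc (0:ℝ) T), f 0 / 2 < f s :=
    (hfc 0 ⟨le_rfl, hT.le⟩).eventually (eventually_gt_nhds (by linarith))
  rw [Filter.Eventually, Metric.mem_nhdsWithin_iff] at hfev
  obtain ⟨δf, hδf0, hδf⟩ := hfev
  -- choose constants
  refine ⟨y0 * (f 0 / 2 * (c / 2 * m)) / 2, by positivity,
    min T (min (δ / 2) (δf / 2)), by positivity, ?_⟩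
  intro t ht θ hθ
  have htT : t ≤ T := ht.2.trans (min_le_left _ _)
  have htδ : t ≤ δ / 2 := ht.2.trans ((min_le_right _ _).trans (min_le_left _ _))
  have htδf : t ≤ δf / 2 := ht.2.trans ((min_le_right _ _).trans (min_le_right _ _))
  obtain ⟨hInt, hD⟩ := outer_hasDerivAt_aux T α β f a adot hfc hfb hac ⟨Ka, hKa⟩ had hadotC
    hθ (⟨ht.1, htT⟩ : t ∈ Ioc (0:ℝ) T)
  have hfun : (fun ϑ => x ϑ t) =
      fun ϑ => y0 * ∫ s in (0:ℝ)..t, f s * Real.exp (∫ r in (0:ℝ)..s, a ϑ r) :=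
    funext fun ϑ => hx ϑ t
  have hD2 : HasDerivAt (fun ϑ => x ϑ t)
      (y0 * ∫ s in (0:ℝ)..t, f s *
        (Real.exp (∫ r in (0:ℝ)..s, a θ r) * ∫ r in (0:ℝ)..s, adot θ r)) θ := by
    rw [hfun]; exact hD.const_mul y0
  rw [hD2.deriv]
  -- lower bound the integral
  have hmono : ∫ s in (0:ℝ)..t, (f 0 / 2 * (c / 2 * m)) * s ≤
      ∫ s in (0:ℝ)..t, f s *
        (Real.exp (∫ r in (0:ℝ)..s, a θ r) * ∫ r in (0:ℝ)..s, adot θ r) := by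
    apply intervalIntegral.integral_mono_on ht.1.le
      ((continuous_const.mul continuous_id).intervalIntegrable _ _) hInt
    intro s hs
    have hsT : s ∈ Icc (0:ℝ) T := ⟨hs.1, hs.2.trans htT⟩
    have hfs : f 0 / 2 < f s := hδf ⟨Metric.mem_ball.2 (by
      rw [Real.dist_eq, sub_zero, abs_of_nonneg hs.1]; linarith [hs.2]), hsT⟩
    have haint : Continuous fun r => a θ r :=
      hac.comp (continuous_const.prodMk continuous_id)
    have hadint : Continuous fun r => adot θ r :=
      hadotC.comp (continuous_const.prodMk continuous_id)
    have hA : c / 2 * s ≤ ∫ r in (0:ℝ)..s, adot θ r := by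
      have := intervalIntegral.integral_mono_on (f := fun _ => c / 2)
        (g := fun r => adot θ r) (μ := MeasureTheory.volume) hs.1
        intervalIntegrable_const (hadint.intervalIntegrable _ _)
        (fun r hr => (hlow θ (Ioo_subset_Icc_self hθ) r ⟨hr.1, hr.2.trans (hs.2.trans htδ)⟩).le)
      rwa [intervalIntegral.integral_const, sub_zero, smul_eq_mul, mul_comm] at this
    have hE : m ≤ Real.exp (∫ r in (0:ℝ)..s, a θ r) := by
      apply Real.exp_le_exp.2
      have h1 : ‖∫ r in (0:ℝ)..s, a θ r‖ ≤ Ka * |s - 0| := by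
        apply intervalIntegral.norm_integral_le_of_norm_le_const
        intro r hr
        have hr' : r ∈ Icc (0:ℝ) T := by
          rw [uIoc_of_le hs.1] at hr
          exact ⟨hr.1.le, hr.2.trans hsT.2⟩
        exact hKa θ hθ r hr'
      rw [sub_zero, abs_of_nonneg hs.1, Real.norm_eq_abs, abs_le] at h1
      nlinarith [h1.1, hsT.2]
    have hA0 : 0 ≤ ∫ r in (0:ℝ)..s, adot θ r := le_trans (mul_nonneg (by linarith) hs.1) hA
    have hstep : c / 2 * s * m ≤ (∫ r in (0:ℝ)..s, adot θ r) *
        Real.exp (∫ r in (0:ℝ)..s, a θ r) := mul_le_mul hA hE hm0.le hA0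
    calc f 0 / 2 * (c / 2 * m) * s = f 0 / 2 * (c / 2 * s * m) := by ring
      _ ≤ f s * ((∫ r in (0:ℝ)..s, adot θ r) * Real.exp (∫ r in (0:ℝ)..s, a θ r)) :=
          mul_le_mul hfs.le hstep (mul_nonneg (mul_nonneg (by linarith) hs.1) hm0.le) (by linarith)
      _ = f s * (Real.exp (∫ r in (0:ℝ)..s, a θ r) * ∫ r in (0:ℝ)..s, adot θ r) := by ring
  have hval : ∫ s in (0:ℝ)..t, (f 0 / 2 * (c / 2 * m)) * s =
      f 0 / 2 * (c / 2 * m) * (t ^ 2 / 2) := by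
    rw [intervalIntegral.integral_const_mul, integral_id]
    ring
  rw [hval] at hmono
  nlinarith [mul_le_mul_of_nonneg_left hmono hy0.le]
end
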